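/- arXiv:1912.02443 — 3 statements merged into one kernel-verified Lean document; each statement's English description precedes it below -/
import Mathlib

section
/- Hardy–Poincaré inequality on the disk: for every ψ ∈ W_0^{1,2}(B_R) where B_R ⊂ ℝ² is the open disk of radius R > 0 centered at the origin, ∫_{B_R} |∇ψ(x)|² dx ≥ (1/(4R)) ∫_{B_R} |ψ(x)|²/|x| dx. -/
open MeasureTheory Set ENNReal


private lemma cs_interval {f : ℝ → ℝ} {a b : ℝ} (hab : a ≤ b) (hf : Continuous f) :
    (∫ t in a..b, f t) ^ 2 ≤ (b - a) * ∫ t in a..b, f t ^ 2 := by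
  rcases eq_or_lt_of_le hab with rfl | hlt
  · simp
  have hba : 0 < b - a := sub_pos.2 hlt
  set A := ∫ t in a..b, f t with hA
  set c : ℝ := A / (b - a) with hc
  have hint1 : IntervalIntegrable (fun t => f t ^ 2) volume a b :=
    (hf.pow 2).intervalIntegrable a b
  have hint2 : IntervalIntegrable (fun t => 2 * c * f t) volume a b :=
    (continuous_const.mul hf).intervalIntegrable a b
  have h1 : (0:ℝ) ≤ ∫ t in a..b, (f t - c) ^ 2 :=
    intervalIntegral.integral_nonneg hab fun u _ => sq_nonneg _
  have hexp : ∫ t in a..b, (f t - c) ^ 2 =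
      (∫ t in a..b, f t ^ 2) - 2 * c * A + (b - a) * c ^ 2 := by
    have he : ∀ t : ℝ, (f t - c) ^ 2 = f t ^ 2 - 2 * c * f t + c ^ 2 := fun t => by ring
    simp_rw [he]
    rw [intervalIntegral.integral_add (hint1.sub hint2) intervalIntegrable_const,
      intervalIntegral.integral_sub hint1 hint2, intervalIntegral.integral_const_mul,
      intervalIntegral.integral_const]
    simp only [smul_eq_mul, ← hA]
    try ring
  rw [hexp] at h1
  have hc1 : 2 * c * A = 2 * (A ^ 2 / (b - a)) := by rw [hc]; ring
  have hc2 : (b - a) * c ^ 2 = A ^ 2 / (b - a) := by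
    rw [hc]; field_simp
  rw [hc1, hc2] at h1
  have h2 : A ^ 2 / (b - a) ≤ ∫ t in a..b, f t ^ 2 := by linarith
  calc A ^ 2 = (A ^ 2 / (b - a)) * (b - a) := by field_simp
    _ ≤ (∫ t in a..b, f t ^ 2) * (b - a) := by
        exact mul_le_mul_of_nonneg_right h2 hba.le
    _ = (b - a) * ∫ t in a..b, f t ^ 2 := mul_comm _ _

private lemma opnorm_sq_le (T : EuclideanSpace ℝ (Fin 2) →L[ℝ] ℂ) :
    ‖T‖ ^ 2 ≤ ∑ k, ‖T (EuclideanSpace.single k (1:ℝ))‖ ^ 2 := by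
  set S := Real.sqrt (∑ k, ‖T (EuclideanSpace.single k (1:ℝ))‖ ^ 2) with hS
  have hsum_nn : 0 ≤ ∑ k, ‖T (EuclideanSpace.single k (1:ℝ))‖ ^ 2 :=
    Finset.sum_nonneg fun k _ => sq_nonneg _
  have hS2 : S ^ 2 = ∑ k, ‖T (EuclideanSpace.single k (1:ℝ))‖ ^ 2 := Real.sq_sqrt hsum_nn
  have hSnn : 0 ≤ S := Real.sqrt_nonneg _
  have hbound : ‖T‖ ≤ S := by
    refine T.opNorm_le_bound hSnn fun v => ?_
    have hv : ∑ i, v i • (EuclideanSpace.single i (1:ℝ)) = v := by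
      have := (EuclideanSpace.basisFun (Fin 2) ℝ).sum_repr v
      simpa [EuclideanSpace.basisFun_apply, EuclideanSpace.basisFun_repr] using this
    have hTv : T v = ∑ k, v k • T (EuclideanSpace.single k (1:ℝ)) := by
      conv_lhs => rw [← hv]
      rw [map_sum]
      simp
    have hnv : ‖v‖ ^ 2 = ∑ k, v k ^ 2 := by
      rw [EuclideanSpace.norm_eq]
      rw [Real.sq_sqrt (Finset.sum_nonneg fun k _ => sq_nonneg _)]
      simp [sq_abs]
    have cs := Finset.sum_mul_sq_le_sq_mul_sq Finset.univ (fun k => |v k|)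
      (fun k => ‖T (EuclideanSpace.single k (1:ℝ))‖)
    have habs : ∑ k, |v k| ^ 2 = ∑ k, v k ^ 2 := by simp [sq_abs]
    have h1 : ‖T v‖ ≤ ∑ k, |v k| * ‖T (EuclideanSpace.single k (1:ℝ))‖ := by
      rw [hTv]
      refine (norm_sum_le _ _).trans_eq ?_
      simp [norm_smul]
    have hnn : (0:ℝ) ≤ ∑ k, |v k| * ‖T (EuclideanSpace.single k (1:ℝ))‖ :=
      Finset.sum_nonneg fun k _ => mul_nonneg (abs_nonneg _) (norm_nonneg _)
    have h2 : ∑ k, |v k| * ‖T (EuclideanSpace.single k (1:ℝ))‖ ≤ S * ‖v‖ := by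
      nlinarith [cs, hS2, hnv, habs, norm_nonneg v, hSnn, mul_nonneg hSnn (norm_nonneg v)]
    exact h1.trans h2
  calc ‖T‖ ^ 2 ≤ S ^ 2 := pow_le_pow_left₀ (norm_nonneg _) hbound 2
    _ = _ := hS2

private lemma pointwise_bound (R : ℝ) (hR : 0 < R) (ψ : EuclideanSpace ℝ (Fin 2) → ℂ)
    (hψ : ContDiff ℝ (⊤ : ℕ∞) ψ)
    (hsupp' : tsupport ψ ⊆ Metric.ball (0 : EuclideanSpace ℝ (Fin 2)) R)
    (x : EuclideanSpace ℝ (Fin 2)) :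
    ENNReal.ofReal (‖ψ x‖ ^ 2 / ‖x‖) ≤
      ENNReal.ofReal R *
        ∫⁻ t in Set.Ioi (1:ℝ), ENNReal.ofReal (‖fderiv ℝ ψ (t • x)‖ ^ 2) := by
  by_cases hx0 : x = 0
  · simp [hx0]
  by_cases hxR : R ≤ ‖x‖
  · have hx : x ∉ tsupport ψ := fun h => by
      have := hsupp' h
      rw [mem_ball_zero_iff] at this
      linarith
    rw [image_eq_zero_of_notMem_tsupport hx]
    simp
  push_neg at hxR
  have hx : (0:ℝ) < ‖x‖ := norm_pos_iff.2 hx0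
  set T : ℝ := R / ‖x‖ with hTdef
  have hT1 : 1 < T := (one_lt_div hx).2 hxR
  have hFc : Continuous fun y => fderiv ℝ ψ y := hψ.continuous_fderiv (by simp)
  set F : EuclideanSpace ℝ (Fin 2) → ℝ := fun y => ‖fderiv ℝ ψ y‖ with hFdef
  have hF : Continuous F := hFc.norm
  have hsx : Continuous fun t : ℝ => t • x := continuous_id.smul continuous_const
  set f : ℝ → ℝ := fun t => F (t • x) with hfdef
  have hf : Continuous f := hF.comp hsx
  set g' : ℝ → ℂ := fun t => fderiv ℝ ψ (t • x) x with hg'def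
  have hg' : Continuous g' := (hFc.comp hsx).clm_apply continuous_const
  have hderiv : ∀ t ∈ Set.uIcc (1:ℝ) T, HasDerivAt (fun s => ψ (s • x)) (g' t) t := by
    intro t _
    have h1 : HasDerivAt (fun s : ℝ => s • x) x t := by
      simpa using (hasDerivAt_id t).smul_const x
    exact ((hψ.differentiable (by simp) (t • x)).hasFDerivAt).comp_hasDerivAt t h1
  have hFTC : ∫ t in (1:ℝ)..T, g' t = ψ (T • x) - ψ ((1:ℝ) • x) :=
    intervalIntegral.integral_eq_sub_of_hasDerivAt hderiv (hg'.intervalIntegrable _ _)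
  have hψT : ψ (T • x) = 0 := by
    refine image_eq_zero_of_notMem_tsupport fun h => ?_
    have h2 := hsupp' h
    rw [mem_ball_zero_iff, norm_smul, Real.norm_eq_abs,
      abs_of_pos (lt_trans one_pos hT1), hTdef, div_mul_cancel₀ _ hx.ne'] at h2
    exact lt_irrefl R h2
  have hψx : ψ x = -∫ t in (1:ℝ)..T, g' t := by
    rw [hFTC, hψT, one_smul, zero_sub, neg_neg]
  have hnorm1 : ‖ψ x‖ ≤ ∫ t in (1:ℝ)..T, ‖g' t‖ := by
    rw [hψx, norm_neg]
    exact intervalIntegral.norm_integral_le_integral_norm hT1.le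
  have hnorm2 : ∫ t in (1:ℝ)..T, ‖g' t‖ ≤ ∫ t in (1:ℝ)..T, f t * ‖x‖ := by
    refine intervalIntegral.integral_mono_on hT1.le (hg'.norm.intervalIntegrable _ _)
      ((hf.mul continuous_const).intervalIntegrable _ _) fun u _ => ?_
    exact (fderiv ℝ ψ (u • x)).le_opNorm x
  set A : ℝ := ∫ t in (1:ℝ)..T, f t with hAdef
  set B : ℝ := ∫ t in (1:ℝ)..T, f t ^ 2 with hBdef
  have hnorm3 : ‖ψ x‖ ≤ A * ‖x‖ := by
    refine hnorm1.trans (hnorm2.trans_eq ?_)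
    rw [hAdef, ← intervalIntegral.integral_mul_const]
  have hA2 : A ^ 2 ≤ (T - 1) * B := cs_interval hT1.le hf
  have hBnn : 0 ≤ B :=
    intervalIntegral.integral_nonneg hT1.le fun u _ => sq_nonneg _
  have hAnn : 0 ≤ A :=
    intervalIntegral.integral_nonneg hT1.le fun u _ => norm_nonneg _
  have hreal : ‖ψ x‖ ^ 2 / ‖x‖ ≤ R * B := by
    rw [div_le_iff₀ hx]
    have hψ2 : ‖ψ x‖ ^ 2 ≤ A ^ 2 * ‖x‖ ^ 2 := by
      have := mul_le_mul hnorm3 hnorm3 (norm_nonneg _) (mul_nonneg hAnn hx.le)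
      nlinarith
    have hTx : T * ‖x‖ = R := div_mul_cancel₀ _ hx.ne'
    have s1 : A ^ 2 * ‖x‖ ^ 2 ≤ (T - 1) * B * ‖x‖ ^ 2 :=
      mul_le_mul_of_nonneg_right hA2 (sq_nonneg _)
    have s2 : (T - 1) * B * ‖x‖ ^ 2 ≤ T * B * ‖x‖ ^ 2 := by nlinarith [hBnn, sq_nonneg ‖x‖]
    have s3 : T * B * ‖x‖ ^ 2 = R * B * ‖x‖ := by rw [← hTx]; ring
    linarith
  calc ENNReal.ofReal (‖ψ x‖ ^ 2 / ‖x‖) ≤ ENNReal.ofReal (R * B) :=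
        ENNReal.ofReal_le_ofReal hreal
    _ = ENNReal.ofReal R * ENNReal.ofReal B := ENNReal.ofReal_mul hR.le
    _ ≤ _ := by
        refine mul_le_mul_right ?_ _
        have hBeq : B = ∫ t in Set.Ioc (1:ℝ) T, f t ^ 2 :=
          intervalIntegral.integral_of_le hT1.le
        have hint : IntegrableOn (fun t => f t ^ 2) (Set.Ioc (1:ℝ) T) :=
          (hf.pow 2).integrableOn_Ioc
        rw [hBeq, ofReal_integral_eq_lintegral_ofReal hint
          (Filter.Eventually.of_forall fun t => sq_nonneg _)]
        exact lintegral_mono_set Set.Ioc_subset_Ioi_self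

/-- Hardy–Poincaré inequality on the disk `B_R ⊂ ℝ²`:
`∫_{B_R} |∇ψ|² ≥ (1/(4R)) ∫_{B_R} |ψ|²/|x|` for `ψ ∈ W₀^{1,2}(B_R)`
(stated here for smooth functions compactly supported in `B_R`). -/
theorem hardy_poincare_disk (R : ℝ) (hR : 0 < R)
    (ψ : EuclideanSpace ℝ (Fin 2) → ℂ)
    (hψ : ContDiff ℝ (⊤ : ℕ∞) ψ) (hsupp : HasCompactSupport ψ)
    (hsupp' : tsupport ψ ⊆ Metric.ball (0 : EuclideanSpace ℝ (Fin 2)) R) :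
    ∫ x in Metric.ball (0 : EuclideanSpace ℝ (Fin 2)) R,
        ∑ k, ‖fderiv ℝ ψ x (EuclideanSpace.single k (1 : ℝ))‖ ^ 2
      ≥ (1 / (4 * R)) *
        ∫ x in Metric.ball (0 : EuclideanSpace ℝ (Fin 2)) R, ‖ψ x‖ ^ 2 / ‖x‖ := by
  set G : EuclideanSpace ℝ (Fin 2) → ℝ := fun x => ∑ k, ‖fderiv ℝ ψ x (EuclideanSpace.single k (1 : ℝ))‖ ^ 2
    with hGdef
  set h : EuclideanSpace ℝ (Fin 2) → ℝ := fun x => ‖ψ x‖ ^ 2 / ‖x‖ with hhdef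
  have hFc : Continuous fun y => fderiv ℝ ψ y := hψ.continuous_fderiv (by simp)
  set F : EuclideanSpace ℝ (Fin 2) → ℝ := fun y => ‖fderiv ℝ ψ y‖ with hFdef
  have hF : Continuous F := hFc.norm
  -- zero off the ball
  have hzero : ∀ x : EuclideanSpace ℝ (Fin 2), x ∉ Metric.ball (0:EuclideanSpace ℝ (Fin 2)) R → x ∉ tsupport ψ := fun x hx h' =>
    hx (hsupp' h')
  have hfderiv_zero : ∀ x : EuclideanSpace ℝ (Fin 2), x ∉ tsupport ψ → fderiv ℝ ψ x = 0 := fun x hx => by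
    have := support_fderiv_subset (𝕜 := ℝ) (f := ψ)
    by_contra h'
    exact hx (this h')
  -- continuity and integrability of G
  have hGc : Continuous G := by
    apply continuous_finset_sum
    intro k _
    exact ((hFc.clm_apply continuous_const).norm.pow 2)
  have hGsupp : HasCompactSupport G := by
    apply HasCompactSupport.intro hsupp
    intro x hx
    simp [hGdef, hfderiv_zero x hx]
  have hGint : Integrable G := hGc.integrable_of_hasCompactSupport hGsupp
  have hGnn : ∀ x, 0 ≤ G x := fun x => Finset.sum_nonneg fun k _ => sq_nonneg _
  -- F^2 integrable
  have hF2supp : HasCompactSupport fun x => F x ^ 2 := by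
    apply HasCompactSupport.intro hsupp
    intro x hx
    simp [hFdef, hfderiv_zero x hx]
  have hF2int : Integrable fun x => F x ^ 2 :=
    (hF.pow 2).integrable_of_hasCompactSupport hF2supp
  set I : ℝ := ∫ x, F x ^ 2 with hIdef
  have hInn : 0 ≤ I := integral_nonneg fun x => sq_nonneg _
  have hI_le_G : I ≤ ∫ x, G x :=
    integral_mono hF2int hGint fun x => opnorm_sq_le _
  -- the main lintegral estimate
  have hmain : ∫⁻ x, ENNReal.ofReal (h x) ≤ ENNReal.ofReal (R * I) := by
    have hprod_meas : Measurable fun z : EuclideanSpace ℝ (Fin 2) × ℝ => ENNReal.ofReal (F (z.2 • z.1) ^ 2) :=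
      (ENNReal.measurable_ofReal.comp
        (((hF.comp (continuous_snd.smul continuous_fst)).pow 2).measurable))
    calc ∫⁻ x, ENNReal.ofReal (h x)
        ≤ ∫⁻ x, ENNReal.ofReal R *
            ∫⁻ t in Set.Ioi (1:ℝ), ENNReal.ofReal (F (t • x) ^ 2) :=
          lintegral_mono fun x => pointwise_bound R hR ψ hψ hsupp' x
      _ = ENNReal.ofReal R *
            ∫⁻ x, ∫⁻ t in Set.Ioi (1:ℝ), ENNReal.ofReal (F (t • x) ^ 2) :=
          lintegral_const_mul' _ _ ENNReal.ofReal_ne_top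
      _ = ENNReal.ofReal R *
            ∫⁻ t in Set.Ioi (1:ℝ), ∫⁻ x, ENNReal.ofReal (F (t • x) ^ 2) := by
          rw [lintegral_lintegral_swap hprod_meas.aemeasurable]
      _ = ENNReal.ofReal R *
            ∫⁻ t in Set.Ioi (1:ℝ), ENNReal.ofReal ((t ^ 2)⁻¹ * I) := by
          congr 1
          refine setLIntegral_congr_fun measurableSet_Ioi
            (fun t ht => ?_)
          have ht0 : (0:ℝ) < t := lt_trans one_pos ht
          have hcs : HasCompactSupport fun x : EuclideanSpace ℝ (Fin 2) => F (t • x) ^ 2 :=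
            hF2supp.comp_smul ht0.ne'
          have hci : Integrable fun x : EuclideanSpace ℝ (Fin 2) => F (t • x) ^ 2 :=
            ((hF.comp (continuous_const_smul t)).pow 2
              ).integrable_of_hasCompactSupport hcs
          rw [← ofReal_integral_eq_lintegral_ofReal hci
            (Filter.Eventually.of_forall fun x => sq_nonneg _)]
          congr 1
          have := Measure.integral_comp_smul_of_nonneg (μ := (volume : Measure (EuclideanSpace ℝ (Fin 2))))
            (fun x => F x ^ 2) t (hR := ht0.le)
          rw [this, finrank_euclideanSpace_fin]
          simp [hIdef, smul_eq_mul]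
      _ = ENNReal.ofReal R *
            ((∫⁻ t in Set.Ioi (1:ℝ), ENNReal.ofReal ((t ^ 2)⁻¹)) * ENNReal.ofReal I) := by
          congr 1
          rw [← lintegral_mul_const' (ENNReal.ofReal I) _ ENNReal.ofReal_ne_top]
          refine setLIntegral_congr_fun measurableSet_Ioi
            (fun t ht => ?_)
          rw [← ENNReal.ofReal_mul (by positivity)]
      _ = ENNReal.ofReal (R * I) := by
          have hrint : IntegrableOn (fun t : ℝ => (t ^ 2)⁻¹) (Set.Ioi (1:ℝ)) := by
            have h1 : IntegrableOn (fun t : ℝ => t ^ (-2:ℝ)) (Set.Ioi (1:ℝ)) :=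
              integrableOn_Ioi_rpow_of_lt (by norm_num) one_pos
            refine h1.congr_fun (fun t ht => ?_) measurableSet_Ioi
            have ht0 : (0:ℝ) < t := lt_trans one_pos ht
            beta_reduce
            rw [Real.rpow_neg ht0.le, Real.rpow_two]
          have hval : ∫ t in Set.Ioi (1:ℝ), (t ^ 2)⁻¹ = 1 := by
            have h1 : ∫ t in Set.Ioi (1:ℝ), (t ^ 2)⁻¹ = ∫ t in Set.Ioi (1:ℝ), t ^ (-2:ℝ) := by
              refine setIntegral_congr_fun measurableSet_Ioi fun t ht => ?_
              have ht0 : (0:ℝ) < t := lt_trans one_pos ht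
              rw [Real.rpow_neg ht0.le, Real.rpow_two]
            rw [h1, integral_Ioi_rpow_of_lt (by norm_num) one_pos]
            norm_num
          rw [← ofReal_integral_eq_lintegral_ofReal hrint
            (Filter.Eventually.of_forall fun t => by positivity)]
          rw [hval, ENNReal.ofReal_one, one_mul, ← ENNReal.ofReal_mul hR.le]
  -- h is integrable and its integral is ≤ R * I
  have hhnn : ∀ x, 0 ≤ h x := fun x => div_nonneg (sq_nonneg _) (norm_nonneg _)
  have hhmeas : Measurable h :=
    ((hψ.continuous.norm.pow 2).measurable).div continuous_norm.measurable
  have hhint : Integrable h := by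
    refine ⟨hhmeas.aestronglyMeasurable, ?_⟩
    rw [hasFiniteIntegral_iff_ofReal (Filter.Eventually.of_forall hhnn)]
    exact lt_of_le_of_lt hmain ENNReal.ofReal_lt_top
  have hle : ∫ x, h x ≤ R * I := by
    rw [← ENNReal.ofReal_le_ofReal_iff (by positivity)]
    rw [ofReal_integral_eq_lintegral_ofReal hhint (Filter.Eventually.of_forall hhnn)]
    exact hmain
  -- replace set integrals by global integrals
  have hsetG : ∫ x in Metric.ball (0:EuclideanSpace ℝ (Fin 2)) R, G x = ∫ x, G x :=
    setIntegral_eq_integral_of_forall_compl_eq_zero fun x hx => by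
      simp [hGdef, hfderiv_zero x (hzero x hx)]
  have hseth : ∫ x in Metric.ball (0:EuclideanSpace ℝ (Fin 2)) R, h x = ∫ x, h x :=
    setIntegral_eq_integral_of_forall_compl_eq_zero fun x hx => by
      simp [hhdef, image_eq_zero_of_notMem_tsupport (hzero x hx)]
  rw [hsetG, hseth, ge_iff_le]
  have hGint_nn : 0 ≤ ∫ x, G x := integral_nonneg hGnn
  have hfinal : ∫ x, h x ≤ R * ∫ x, G x :=
    hle.trans (mul_le_mul_of_nonneg_left hI_le_G hR.le)
  rw [one_div, inv_mul_le_iff₀ (by positivity)]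
  nlinarith
end

section
/- Commutation relation for regularised magnetic derivatives: for A with A_k ∈ W^{1,1}_loc and u smooth compactly supported, [∂_{l,A}, ∂_{k,A}^{δ,N}] u = i[(∂_l A_k) χ_{{|A_k| ≤ N}} − (∂_k^δ A_l) τ_k^δ] u, where ∂_{l,A} := ∂_l + iA_l, ∂_{k,A}^{δ,N} := ∂_k^δ + i T_N(A_k), τ_k^δ u(x) := u(x + δe_k), ∂_k^δ u := (τ_k^δ u − u)/δ, and T_N(s) := max{−N, min{s, N}}. -/
open Complex

noncomputable section

/-- The regularised magnetic difference quotient `∂_{k,A}^{δ,N} f = ∂_k^δ f + i T_N(A_k) f`. -/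
def regMagDiffQuot {d : ℕ} (A : EuclideanSpace ℝ (Fin d) → Fin d → ℝ) (k : Fin d)
    (δ N : ℝ) (f : EuclideanSpace ℝ (Fin d) → ℂ) (x : EuclideanSpace ℝ (Fin d)) : ℂ :=
  (f (x + δ • EuclideanSpace.single k (1 : ℝ)) - f x) / (δ : ℂ)
    + I * ((max (-N) (min (A x k) N) : ℝ) : ℂ) * f x

/-- The magnetic derivative `∂_{l,A} f = ∂_l f + i A_l f`. -/
def magDeriv {d : ℕ} (A : EuclideanSpace ℝ (Fin d) → Fin d → ℝ) (l : Fin d)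
    (f : EuclideanSpace ℝ (Fin d) → ℂ) (x : EuclideanSpace ℝ (Fin d)) : ℂ :=
  fderiv ℝ f x (EuclideanSpace.single l (1 : ℝ)) + I * ((A x l : ℝ) : ℂ) * f x

/-- Commutation relation between the magnetic derivative and its regularised version:
`[∂_{l,A}, ∂_{k,A}^{δ,N}] u = i[(∂_l A_k) χ_{|A_k| ≤ N} − (∂_k^δ A_l) τ_k^δ] u`. -/
theorem commutator_regularised_magnetic (d : ℕ) (k l : Fin d) (δ : ℝ) (hδ : δ ≠ 0)
    (N : ℝ) (hN : 0 < N)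
    (A : EuclideanSpace ℝ (Fin d) → Fin d → ℝ)
    (hA : ∀ j, Differentiable ℝ (fun y => A y j))
    (u : EuclideanSpace ℝ (Fin d) → ℂ)
    (hu : ContDiff ℝ (⊤ : ℕ∞) u) (hsupp : HasCompactSupport u)
    (x : EuclideanSpace ℝ (Fin d)) (hx : |A x k| ≠ N) :
    magDeriv A l (regMagDiffQuot A k δ N u) x
        - regMagDiffQuot A k δ N (magDeriv A l u) x
      = I * (((fderiv ℝ (fun y => A y k) x (EuclideanSpace.single l (1 : ℝ)) : ℝ) : ℂ) *
            (if |A x k| ≤ N then (1 : ℂ) else 0) * u x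
          - (((A (x + δ • EuclideanSpace.single k (1 : ℝ)) l - A x l) / δ : ℝ) : ℂ) *
            u (x + δ • EuclideanSpace.single k (1 : ℝ))) := by
  classical
  set e : EuclideanSpace ℝ (Fin d) := δ • EuclideanSpace.single k (1 : ℝ) with he
  set v : EuclideanSpace ℝ (Fin d) := EuclideanSpace.single l (1 : ℝ) with hv
  have hud : Differentiable ℝ u := hu.differentiable (by simp)
  -- the truncation `T : y ↦ max (-N) (min (A y k) N)` and its derivative `D` at `x`
  set T : EuclideanSpace ℝ (Fin d) → ℝ := fun y => max (-N) (min (A y k) N) with hT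
  set D : EuclideanSpace ℝ (Fin d) →L[ℝ] ℝ :=
    if |A x k| ≤ N then fderiv ℝ (fun y => A y k) x else 0 with hD
  have hAc : ContinuousAt (fun y => A y k) x := (hA k).continuous.continuousAt
  have hTd : HasFDerivAt T D x := by
    rcases lt_or_gt_of_ne hx with h1 | h1
    · -- |A x k| < N : locally T = A · k
      obtain ⟨hl, hr⟩ := abs_lt.mp h1
      have hev : T =ᶠ[nhds x] fun y => A y k := by
        have h2 : ∀ᶠ y in nhds x, A y k < N :=
          hAc.eventually_lt_const hr
        have h3 : ∀ᶠ y in nhds x, -N < A y k :=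
          hAc.eventually_const_lt hl
        filter_upwards [h2, h3] with y hy2 hy3
        simp [hT, min_eq_left hy2.le, max_eq_right hy3.le]
      have hDeq : D = fderiv ℝ (fun y => A y k) x := by
        rw [hD, if_pos h1.le]
      rw [hDeq]
      exact ((hA k) x).hasFDerivAt.congr_of_eventuallyEq hev
    · -- N < |A x k| : locally T is constant
      have hDeq : D = 0 := by rw [hD, if_neg (not_le.mpr h1)]
      rcases lt_abs.mp h1 with h2 | h2
      · -- N < A x k : locally T = N
        have hev : T =ᶠ[nhds x] fun _ => N := by
          filter_upwards [hAc.eventually_const_lt h2] with y hy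
          simp [hT, min_eq_right hy.le, max_eq_right (by linarith : (-N : ℝ) ≤ N)]
        rw [hDeq]
        exact (hasFDerivAt_const N x).congr_of_eventuallyEq hev
      · -- A x k < -N : locally T = -N
        have h2' : A x k < -N := by linarith
        have hev : T =ᶠ[nhds x] fun _ => (-N : ℝ) := by
          filter_upwards [hAc.eventually_lt_const h2'] with y hy
          simp [hT, min_eq_left (by linarith : A y k ≤ N), max_eq_left (by linarith : A y k ≤ -N)]
        rw [hDeq]
        exact (hasFDerivAt_const (-N) x).congr_of_eventuallyEq hev
  -- complex-valued truncation
  have hTdc : HasFDerivAt (fun y => ((T y : ℝ) : ℂ)) (Complex.ofRealCLM.comp D) x :=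
    Complex.ofRealCLM.hasFDerivAt.comp x hTd
  -- derivative of the shifted function
  have hsh : HasFDerivAt (fun y => u (y + e)) (fderiv ℝ u (x + e)) x := by
    have h1 : HasFDerivAt (fun y : EuclideanSpace ℝ (Fin d) => y + e)
        (ContinuousLinearMap.id ℝ (EuclideanSpace ℝ (Fin d))) x :=
      (hasFDerivAt_id x).add_const e
    have h2 := (hud (x + e)).hasFDerivAt.comp x h1
    simpa [Function.comp_def] using h2
  have hux : HasFDerivAt u (fderiv ℝ u x) x := (hud x).hasFDerivAt
  -- derivative of `regMagDiffQuot A k δ N u`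
  have hF : HasFDerivAt (regMagDiffQuot A k δ N u)
      (((δ : ℂ)⁻¹ • (fderiv ℝ u (x + e) - fderiv ℝ u x))
        + (((I * (T x : ℂ)) • fderiv ℝ u x)
            + u x • (I • Complex.ofRealCLM.comp D))) x := by
    have h1 : HasFDerivAt (fun y => (δ : ℂ)⁻¹ * (u (y + e) - u y))
        ((δ : ℂ)⁻¹ • (fderiv ℝ u (x + e) - fderiv ℝ u x)) x :=
      (hsh.sub hux).const_mul _
    have h2 : HasFDerivAt (fun y => I * ((T y : ℝ) : ℂ))
        (I • Complex.ofRealCLM.comp D) x := hTdc.const_mul I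
    have h3 : HasFDerivAt (fun y => (I * ((T y : ℝ) : ℂ)) * u y)
        ((I * (T x : ℂ)) • fderiv ℝ u x + u x • (I • Complex.ofRealCLM.comp D)) x :=
      h2.mul hux
    have h4 := h1.add h3
    apply h4.congr_of_eventuallyEq
    filter_upwards with y
    simp only [regMagDiffQuot, hT]
    rw [div_eq_inv_mul]
    rfl
  -- compute the first derivative term in `magDeriv`
  have hfd : fderiv ℝ (regMagDiffQuot A k δ N u) x v
      = (δ : ℂ)⁻¹ * (fderiv ℝ u (x + e) v - fderiv ℝ u x v)
        + (I * (T x : ℂ)) * fderiv ℝ u x v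
        + u x * (I * (D v : ℝ)) := by
    rw [hF.fderiv]
    simp [smul_eq_mul, mul_comm]
    ring
  -- the characteristic-function factor
  have hDv : ((D v : ℝ) : ℂ)
      = ((fderiv ℝ (fun y => A y k) x v : ℝ) : ℂ) * (if |A x k| ≤ N then (1 : ℂ) else 0) := by
    by_cases hcase : |A x k| ≤ N
    · rw [hD, if_pos hcase, if_pos hcase, mul_one]
    · rw [hD, if_neg hcase, if_neg hcase, mul_zero]
      simp
  -- now unfold everything and do algebra
  simp only [magDeriv, regMagDiffQuot, ← he, ← hv, ← hT, hfd]
  rw [hDv]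
  have hδ' : (δ : ℂ) ≠ 0 := by exact_mod_cast hδ
  push_cast
  field_simp
  split_ifs <;> ring
end
end

section
/- Approximation lemma: if A_l ∈ W^{1,p}_loc(ℝ^d) with p as in the standing hypothesis (p = d for d ≥ 3) and u ∈ H¹(ℝ^d) ∩ L²(ℝ^d) is compactly supported, then (∂_k^δ A_l) τ_k^δ u → (∂_k A_l) u in L²(ℝ^d) as δ → 0, where ∂_k^δ is the difference quotient and τ_k^δ the translation. -/
/-
The fundamental theorem of calculus along the segment from `x` to `x + δ e` writes the difference
quotient `∂_e^δ a (x)` as the average of `∂_e a` over that segment. Jensen's inequality, Tonelli and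
the translation invariance of Lebesgue measure then bound `‖∂_e^δ a‖_{L^q(K)}` by
`‖∂_e a‖_{L^q(K')}` for a slightly larger compact set `K'`, uniformly in `0 < |δ| ≤ 1`. Since `u` is
bounded and compactly supported, the functions `(∂_e^δ a) τ_e^δ u` all live on one compact set and
are bounded in `L^q` there, `q = d > 2`; hence they are uniformly integrable in `L²`. They converge
pointwise to `(∂_e a) u` because `a` is differentiable and `u` continuous, and Vitali's convergence
theorem gives convergence in `L²`.
-/

open MeasureTheory Filter Topology Set
open scoped ENNReal Interval

theorem rpow_laverage_le_laverage_rpow {α : Type*} {m : MeasurableSpace α} {μ : Measure α}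
    [IsFiniteMeasure μ] [NeZero μ] {f : α → ℝ≥0∞} (hf : AEMeasurable f μ) {r : ℝ} (hr : 1 ≤ r) :
    (⨍⁻ x, f x ∂μ) ^ r ≤ ⨍⁻ x, f x ^ r ∂μ := by
  rcases hr.eq_or_lt with rfl | hr
  · simp
  simp only [laverage_eq']
  set ν := (μ univ)⁻¹ • μ
  -- Hölder's inequality against the constant function `1` of the probability measure `ν`
  have H := ENNReal.lintegral_mul_le_Lp_mul_Lq ν (Real.HolderConjugate.conjExponent hr)
    (hf.smul_measure _) aemeasurable_const (g := fun _ => 1)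
  simp only [Pi.mul_apply, mul_one, ENNReal.one_rpow, lintegral_const, measure_univ] at H
  calc (∫⁻ x, f x ∂ν) ^ r ≤ ((∫⁻ x, f x ^ r ∂ν) ^ (1 / r)) ^ r := by gcongr
    _ = ∫⁻ x, f x ^ r ∂ν := by
      rw [← ENNReal.rpow_mul, one_div_mul_cancel (by positivity), ENNReal.rpow_one]

theorem setLIntegral_comp_add_right_le {G : Type*} [AddGroup G] [MeasurableSpace G]
    [MeasurableAdd G] {μ : Measure G} [μ.IsAddRightInvariant] (f : G → ℝ≥0∞) {c : G}
    {s t : Set G} (hst : ∀ x ∈ s, x + c ∈ t) :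
    ∫⁻ x in s, f (x + c) ∂μ ≤ ∫⁻ y in t, f y ∂μ := by
  rw [(measurePreserving_add_right μ c).setLIntegral_comp_emb
    (MeasurableEquiv.addRight c).measurableEmbedding f s]
  exact lintegral_mono_set (image_subset_iff.2 hst)

theorem unifIntegrable_of_eLpNorm_le {α ι β : Type*} {m : MeasurableSpace α} {μ : Measure α}
    [NormedAddCommGroup β] {f : ι → α → β} {p q : ℝ≥0∞} (hpq : p < q)
    (hf : ∀ i, AEStronglyMeasurable (f i) μ) {C : ℝ≥0∞} (hC : C ≠ ∞)
    (hfC : ∀ i, eLpNorm (f i) q μ ≤ C) : UnifIntegrable f p μ := by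
  intro ε hε
  rcases eq_or_ne p 0 with rfl | hp₀
  · exact ⟨1, one_pos, fun _ _ _ _ => by simp⟩
  set κ := 1 / p.toReal - 1 / q.toReal
  have hκ : 0 < κ := by
    have hp : 0 < p.toReal := ENNReal.toReal_pos hp₀ hpq.ne_top
    rcases eq_or_ne q ∞ with rfl | hq
    · simpa [κ] using hp
    · rw [sub_pos]
      exact one_div_lt_one_div_of_lt hp ((ENNReal.toReal_lt_toReal hpq.ne_top hq).2 hpq)
  -- Hölder on `s` bounds `‖1_s f i‖_p` by `C μ(s)^κ`, which is small when `μ s` is.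
  have hsmall : ∀ᶠ m in 𝓝 (0 : ℝ≥0∞), C * m ^ κ ≤ ENNReal.ofReal ε := by
    have hlim : Tendsto (fun m : ℝ≥0∞ => C * m ^ κ) (𝓝 0) (𝓝 0) := by
      simpa [ENNReal.zero_rpow_of_pos hκ] using
        ENNReal.Tendsto.const_mul ((ENNReal.continuous_rpow_const (y := κ)).tendsto 0) (Or.inr hC)
    exact hlim (Iic_mem_nhds (ENNReal.ofReal_pos.2 hε))
  obtain ⟨η, hη, hηε⟩ := ENNReal.nhds_zero_basis_Iic.mem_iff.1 hsmall
  refine ⟨(min η 1).toReal, ENNReal.toReal_pos (by simp [hη.ne']) (by simp), fun i s hs hμs => ?_⟩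
  rw [eLpNorm_indicator_eq_eLpNorm_restrict hs]
  calc eLpNorm (f i) p (μ.restrict s)
      ≤ eLpNorm (f i) q (μ.restrict s) * μ.restrict s univ ^ κ :=
        eLpNorm_le_eLpNorm_mul_rpow_measure_univ hpq.le (hf i).restrict
    _ ≤ C * μ s ^ κ := by
        rw [Measure.restrict_apply_univ]
        gcongr
        exact (eLpNorm_mono_measure _ Measure.restrict_le_self).trans (hfC i)
    _ ≤ ENNReal.ofReal ε := hηε (hμs.trans (by simp))

theorem tendsto_eLpNorm_sub_of_eventually_eLpNorm_le {α ι β : Type*} {m : MeasurableSpace α}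
    {μ : Measure α} [IsFiniteMeasure μ] [NormedAddCommGroup β] {l : Filter ι}
    [l.IsCountablyGenerated] {f : ι → α → β} {g : α → β} {p q : ℝ≥0∞} (hp : 1 ≤ p)
    (hpq : p < q) {C : ℝ≥0∞} (hC : C ≠ ∞)
    (hf : ∀ᶠ i in l, AEStronglyMeasurable (f i) μ ∧ eLpNorm (f i) q μ ≤ C) (hg : MemLp g p μ)
    (hfg : ∀ᵐ x ∂μ, Tendsto (fun i => f i x) l (𝓝 (g x))) :
    Tendsto (fun i => eLpNorm (f i - g) p μ) l (𝓝 0) := by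
  refine tendsto_iff_seq_tendsto.2 fun φ hφ => ?_
  obtain ⟨N, hN⟩ := eventually_atTop.1 (hφ.eventually hf)
  have hφN : Tendsto (fun n => φ (n + N)) atTop l := (tendsto_add_atTop_iff_nat N).2 hφ
  refine (tendsto_add_atTop_iff_nat N).1 <|
    tendsto_Lp_finite_of_tendsto_ae hp hpq.ne_top (fun n => (hN _ le_add_self).1) hg
      (unifIntegrable_of_eLpNorm_le hpq (fun n => (hN _ le_add_self).1) hC
        fun n => (hN _ le_add_self).2) ?_
  filter_upwards [hfg] with x hx
  exact hx.comp hφN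

theorem enorm_slope_le_setLAverage {F : Type*} [NormedAddCommGroup F] [NormedSpace ℝ F]
    [CompleteSpace F] {φ φ' : ℝ → F} {a b : ℝ} (hab : a ≠ b)
    (hφ : ∀ t ∈ uIcc a b, HasDerivAt φ (φ' t) t)
    (hφ' : AEStronglyMeasurable φ' (volume.restrict (Ι a b))) :
    ‖slope φ a b‖ₑ ≤ ⨍⁻ t in Ι a b, ‖φ' t‖ₑ ∂volume := by
  have hvol : volume (Ι a b) = ENNReal.ofReal |b - a| := Real.volume_uIoc
  have hvol₀ : volume (Ι a b) ≠ 0 := by simp [hvol, sub_ne_zero.2 hab.symm]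
  rw [setLAverage_eq]
  by_cases hfin : ∫⁻ t in Ι a b, ‖φ' t‖ₑ = ∞
  · simp [hfin, ENNReal.top_div, hvol]
  have hint : IntervalIntegrable φ' volume a b :=
    intervalIntegrable_iff.2 ⟨hφ', lt_top_iff_ne_top.2 hfin⟩
  rw [slope, vsub_eq_sub, ← intervalIntegral.integral_eq_sub_of_hasDerivAt hφ hint,
    intervalIntegral.intervalIntegral_eq_integral_uIoc, enorm_smul, enorm_smul, hvol]
  have hsign : ‖(if a ≤ b then 1 else -1 : ℝ)‖ₑ = 1 := by split_ifs <;> simp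
  rw [hsign, one_mul, enorm_inv (sub_ne_zero.2 hab.symm), Real.enorm_eq_ofReal_abs,
    ENNReal.div_eq_inv_mul]
  gcongr
  exact enorm_integral_le_lintegral_enorm _

section DifferenceQuotient

variable {E F : Type*} [NormedAddCommGroup E] [NormedSpace ℝ E]
  [NormedAddCommGroup F] [NormedSpace ℝ F]

noncomputable def diffQuot (a : E → F) (e : E) (δ : ℝ) (x : E) : F := δ⁻¹ • (a (x + δ • e) - a x)

theorem diffQuot_eq_slope (a : E → F) (e : E) (δ : ℝ) (x : E) :
    diffQuot a e δ x = slope (fun τ : ℝ => a (x + τ • e)) 0 δ := by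
  simp [diffQuot, slope_def_module]

theorem hasDerivAt_comp_add_smul {a : E → F} {x e : E} {τ : ℝ}
    (ha : DifferentiableAt ℝ a (x + τ • e)) :
    HasDerivAt (fun σ : ℝ => a (x + σ • e)) (fderiv ℝ a (x + τ • e) e) τ := by
  have hline : HasDerivAt (fun σ : ℝ => x + σ • e) e τ := by
    simpa using ((hasDerivAt_id τ).smul_const e).const_add x
  exact ha.hasFDerivAt.comp_hasDerivAt τ hline

theorem tendsto_diffQuot {a : E → F} {x : E} (ha : DifferentiableAt ℝ a x) (e : E) :
    Tendsto (fun δ => diffQuot a e δ x) (𝓝[≠] 0) (𝓝 (fderiv ℝ a x e)) := by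
  have h := hasDerivAt_iff_tendsto_slope.1 (hasDerivAt_comp_add_smul (x := x) (e := e) (τ := 0)
    (by simpa using ha))
  simpa only [diffQuot_eq_slope, zero_smul, add_zero] using h

theorem enorm_diffQuot_rpow_le [CompleteSpace F] {a : E → F} (ha : Differentiable ℝ a)
    (e x : E) {δ : ℝ} (hδ : δ ≠ 0) {r : ℝ} (hr : 1 ≤ r) :
    ‖diffQuot a e δ x‖ₑ ^ r ≤ ⨍⁻ τ in Ι 0 δ, ‖fderiv ℝ a (x + τ • e) e‖ₑ ^ r ∂volume := by
  have hderiv : ∀ τ : ℝ, HasDerivAt (fun σ : ℝ => a (x + σ • e)) (fderiv ℝ a (x + τ • e) e) τ :=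
    fun τ => hasDerivAt_comp_add_smul (ha _)
  have hmeas : AEStronglyMeasurable (fun τ : ℝ => fderiv ℝ a (x + τ • e) e)
      (volume.restrict (Ι 0 δ)) := by
    rw [← funext fun τ => (hderiv τ).deriv]
    exact aestronglyMeasurable_deriv _ _
  have hvol : volume (Ι (0 : ℝ) δ) = ENNReal.ofReal |δ| := by simp [Real.volume_uIoc]
  have : IsFiniteMeasure (volume.restrict (Ι (0 : ℝ) δ)) :=
    isFiniteMeasure_restrict.2 (by simp [hvol])
  have : NeZero (volume.restrict (Ι (0 : ℝ) δ)) := ⟨by simp [hvol, hδ]⟩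
  rw [diffQuot_eq_slope]
  calc ‖slope (fun τ : ℝ => a (x + τ • e)) 0 δ‖ₑ ^ r
      ≤ (⨍⁻ τ in Ι 0 δ, ‖fderiv ℝ a (x + τ • e) e‖ₑ ∂volume) ^ r := by
        gcongr
        exact enorm_slope_le_setLAverage hδ.symm (fun τ _ => hderiv τ) hmeas
    _ ≤ _ := rpow_laverage_le_laverage_rpow hmeas.enorm hr

theorem eLpNorm_diffQuot_le [CompleteSpace F] [MeasurableSpace E] [BorelSpace E] {μ : Measure E}
    [μ.IsAddRightInvariant] [SFinite μ] {a : E → F} (ha : Differentiable ℝ a) (e : E) {δ : ℝ}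
    (hδ : δ ≠ 0) {p : ℝ≥0∞} (hp : 1 ≤ p) (hp' : p ≠ ∞) {s t : Set E}
    (hst : ∀ x ∈ s, ∀ τ ∈ Ι 0 δ, x + τ • e ∈ t) :
    eLpNorm (diffQuot a e δ) p (μ.restrict s)
      ≤ eLpNorm (fun y => fderiv ℝ a y e) p (μ.restrict t) := by
  borelize F
  have hp₀ : p ≠ 0 := (zero_lt_one.trans_le hp).ne'
  set r := p.toReal
  have hr : 1 ≤ r := by simpa using ENNReal.toReal_mono hp' hp
  rw [eLpNorm_eq_lintegral_rpow_enorm_toReal hp₀ hp',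
    eLpNorm_eq_lintegral_rpow_enorm_toReal hp₀ hp']
  refine ENNReal.rpow_le_rpow ?_ (by positivity)
  set G : E → ℝ≥0∞ := fun y => ‖fderiv ℝ a y e‖ₑ ^ r
  have hvol : volume (Ι (0 : ℝ) δ) = ENNReal.ofReal |δ| := by simp [Real.volume_uIoc]
  have hGline : Measurable fun z : E × ℝ => G (z.1 + z.2 • e) :=
    ((measurable_fderiv_apply_const ℝ a e).enorm.pow_const r).comp
      (continuous_fst.add (continuous_snd.smul continuous_const)).measurable
  calc ∫⁻ x in s, ‖diffQuot a e δ x‖ₑ ^ r ∂μ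
      ≤ ∫⁻ x in s, ⨍⁻ τ in Ι 0 δ, G (x + τ • e) ∂volume ∂μ :=
        lintegral_mono fun x => enorm_diffQuot_rpow_le ha e x hδ hr
    _ = ⨍⁻ τ in Ι 0 δ, ∫⁻ x in s, G (x + τ • e) ∂μ ∂volume :=
        lintegral_lintegral_swap hGline.aemeasurable
    _ ≤ ⨍⁻ _ in Ι 0 δ, ∫⁻ y in t, G y ∂μ ∂volume := by
        refine laverage_mono_ae ?_
        filter_upwards [ae_restrict_mem measurableSet_uIoc] with τ hτ
        exact setLIntegral_comp_add_right_le G fun x hx => hst x hx τ hτ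
    _ = ∫⁻ y in t, G y ∂μ := setLAverage_const (by simp [hvol, hδ]) (by simp [hvol]) _

theorem add_smul_mem_cthickening {s : Set E} {x : E} (hx : x ∈ s) (e : E) {τ : ℝ} (hτ : |τ| ≤ 1) :
    x + τ • e ∈ Metric.cthickening ‖e‖ s := by
  refine Metric.mem_cthickening_of_dist_le _ x _ s hx ?_
  rw [dist_eq_norm, add_sub_cancel_left, norm_smul, Real.norm_eq_abs]
  exact mul_le_of_le_one_left (norm_nonneg e) hτ

theorem eLpNorm_diffQuot_mul_le [MeasurableSpace E] [BorelSpace E] {μ : Measure E}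
    [μ.IsAddRightInvariant] [SFinite μ] {a : E → ℝ} (ha : Differentiable ℝ a) (e : E) {δ : ℝ}
    (hδ : δ ≠ 0) (hδ₁ : |δ| ≤ 1) {q : ℝ≥0∞} (hq : 1 ≤ q) (hq' : q ≠ ∞) {u : E → ℂ} {M : ℝ}
    (hM : ∀ x, ‖u x‖ ≤ M) (s : Set E) :
    eLpNorm (fun x => ((diffQuot a e δ x : ℝ) : ℂ) * u (x + δ • e)) q (μ.restrict s)
      ≤ ENNReal.ofReal M *
        eLpNorm (fun y => fderiv ℝ a y e) q (μ.restrict (Metric.cthickening ‖e‖ s)) := by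
  calc eLpNorm (fun x => ((diffQuot a e δ x : ℝ) : ℂ) * u (x + δ • e)) q (μ.restrict s)
      ≤ ENNReal.ofReal M * eLpNorm (diffQuot a e δ) q (μ.restrict s) := by
        refine eLpNorm_le_mul_eLpNorm_of_ae_le_mul (ae_of_all _ fun x => ?_) q
        rw [norm_mul, Complex.norm_real, mul_comm]
        exact mul_le_mul_of_nonneg_right (hM _) (norm_nonneg _)
    _ ≤ _ := by
        gcongr
        refine eLpNorm_diffQuot_le ha e hδ hq hq' fun x hx τ hτ => add_smul_mem_cthickening hx e ?_
        simpa using (abs_sub_left_of_mem_uIcc (uIoc_subset_uIcc hτ)).trans (by simpa using hδ₁)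

theorem tendsto_diffQuot_mul_comp_add {a : E → ℝ} {u : E → ℂ} {x : E}
    (ha : DifferentiableAt ℝ a x) (hu : ContinuousAt u x) (e : E) :
    Tendsto (fun δ => ((diffQuot a e δ x : ℝ) : ℂ) * u (x + δ • e)) (𝓝[≠] 0)
      (𝓝 (((fderiv ℝ a x e : ℝ) : ℂ) * u x)) := by
  have hshift : Tendsto (fun δ : ℝ => x + δ • e) (𝓝[≠] 0) (𝓝 x) :=
    ((continuous_const.add (continuous_id.smul continuous_const)).tendsto' 0 x
      (by simp)).mono_left nhdsWithin_le_nhds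
  exact ((Complex.continuous_ofReal.tendsto _).comp (tendsto_diffQuot ha e)).mul
    (hu.tendsto.comp hshift)

theorem support_diffQuot_mul_sub_subset {a : E → ℝ} {u : E → ℂ} (e : E) {δ : ℝ} (hδ : |δ| ≤ 1) :
    Function.support (fun x => ((diffQuot a e δ x : ℝ) : ℂ) * u (x + δ • e)
      - ((fderiv ℝ a x e : ℝ) : ℂ) * u x) ⊆ Metric.cthickening ‖e‖ (tsupport u) := by
  intro x hx
  by_contra hxK
  have hu : u x = 0 := image_eq_zero_of_notMem_tsupport fun h =>
    hxK (Metric.self_subset_cthickening _ h)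
  have hu' : u (x + δ • e) = 0 := image_eq_zero_of_notMem_tsupport fun h =>
    hxK (by simpa using add_smul_mem_cthickening h e (τ := -δ) (by rwa [abs_neg]))
  simp [hu, hu'] at hx

end DifferenceQuotient

section Approximation

variable {E : Type*} [NormedAddCommGroup E] [NormedSpace ℝ E] [ProperSpace E]
  [MeasurableSpace E] [BorelSpace E] {μ : Measure E} [μ.IsAddRightInvariant]
  [IsFiniteMeasureOnCompacts μ]

theorem tendsto_eLpNorm_diffQuot_mul_sub {a : E → ℝ} (ha : Differentiable ℝ a) (e : E)
    {p q : ℝ≥0∞} (hp : 1 ≤ p) (hpq : p < q) (hq : q ≠ ∞)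
    (haq : ∀ K : Set E, IsCompact K → MemLp (fun y => fderiv ℝ a y e) q (μ.restrict K))
    {u : E → ℂ} (hu : Continuous u) (husupp : HasCompactSupport u) :
    Tendsto (fun δ => eLpNorm (fun x => ((diffQuot a e δ x : ℝ) : ℂ) * u (x + δ • e)
      - ((fderiv ℝ a x e : ℝ) : ℂ) * u x) p μ) (𝓝[≠] 0) (𝓝 0) := by
  set Φ : ℝ → E → ℂ := fun δ x => ((diffQuot a e δ x : ℝ) : ℂ) * u (x + δ • e)
    - ((fderiv ℝ a x e : ℝ) : ℂ) * u x
  set K₁ := Metric.cthickening ‖e‖ (tsupport u)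
  have hK₁ : IsCompact K₁ := husupp.cthickening
  have : IsFiniteMeasure (μ.restrict K₁) := isFiniteMeasure_restrict.2 hK₁.measure_ne_top
  obtain ⟨M, hM⟩ := husupp.exists_bound_of_continuous hu
  have hsmall : ∀ᶠ δ in 𝓝[≠] (0 : ℝ), δ ≠ 0 ∧ |δ| ≤ 1 :=
    eventually_mem_nhdsWithin.and <| eventually_nhdsWithin_of_eventually_nhds <|
      Filter.mem_of_superset (Metric.closedBall_mem_nhds (0 : ℝ) one_pos) fun δ hδ => by
        simpa using hδ
  have hlocal : ∀ᶠ δ in 𝓝[≠] (0 : ℝ), eLpNorm (Φ δ) p μ = eLpNorm (Φ δ) p (μ.restrict K₁) :=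
    hsmall.mono fun δ hδ => (eLpNorm_restrict_eq_of_support_subset
      (support_diffQuot_mul_sub_subset e hδ.2)).symm
  refine (tendsto_congr' hlocal).2 <|
    tendsto_eLpNorm_sub_of_eventually_eLpNorm_le hp hpq (C := ENNReal.ofReal M *
      eLpNorm (fun y => fderiv ℝ a y e) q (μ.restrict (Metric.cthickening ‖e‖ K₁))) ?_ ?_ ?_
      (ae_of_all _ fun x => tendsto_diffQuot_mul_comp_add (ha x) hu.continuousAt e)
  · exact ENNReal.mul_ne_top ENNReal.ofReal_ne_top (haq _ hK₁.cthickening).eLpNorm_ne_top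
  · filter_upwards [hsmall] with δ hδ
    have hcont : Continuous fun x => ((diffQuot a e δ x : ℝ) : ℂ) * u (x + δ • e) := by
      have := ha.continuous
      unfold diffQuot
      fun_prop
    exact ⟨hcont.aestronglyMeasurable,
      eLpNorm_diffQuot_mul_le ha e hδ.1 hδ.2 (hp.trans hpq.le) hq hM K₁⟩
  · refine ((haq K₁ hK₁).mono_exponent hpq.le).of_le_mul (c := M) ?_ (ae_of_all _ fun x => ?_)
    · exact ((Complex.measurable_ofReal.comp (measurable_fderiv_apply_const ℝ a e)).mul
        hu.measurable).aestronglyMeasurable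
    · rw [norm_mul, Complex.norm_real, mul_comm]
      exact mul_le_mul_of_nonneg_right (hM _) (norm_nonneg _)

end Approximation

theorem diff_quotient_approximation_general (d : ℕ) (hd : 3 ≤ d) (k : Fin d)
    (a : EuclideanSpace ℝ (Fin d) → ℝ)
    (ha : Differentiable ℝ a)
    (haW : ∀ K : Set (EuclideanSpace ℝ (Fin d)), IsCompact K →
      MemLp (fun x => ‖fderiv ℝ a x‖) (d : ℝ≥0∞) (volume.restrict K))
    (u : EuclideanSpace ℝ (Fin d) → ℂ)
    (hu : Differentiable ℝ u) (husupp : HasCompactSupport u) :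
    Tendsto (fun δ : ℝ =>
        eLpNorm (fun x : EuclideanSpace ℝ (Fin d) =>
            (((a (x + δ • EuclideanSpace.single k (1 : ℝ)) - a x) / δ : ℝ) : ℂ) *
              u (x + δ • EuclideanSpace.single k (1 : ℝ))
            - ((fderiv ℝ a x (EuclideanSpace.single k (1 : ℝ)) : ℝ) : ℂ) * u x)
          2 volume)
      (𝓝[≠] (0 : ℝ)) (𝓝 0) := by
  set e : EuclideanSpace ℝ (Fin d) := EuclideanSpace.single k 1
  have hpartial : ∀ K : Set (EuclideanSpace ℝ (Fin d)), IsCompact K →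
      MemLp (fun y => fderiv ℝ a y e) d (volume.restrict K) := fun K hK =>
    (haW K hK).of_le_mul (measurable_fderiv_apply_const ℝ a e).aestronglyMeasurable
      (ae_of_all _ fun y => by simpa [mul_comm] using (fderiv ℝ a y).le_opNorm e)
  have hdiffQuot : ∀ δ x, (a (x + δ • e) - a x) / δ = diffQuot a e δ x := fun δ x => by
    rw [diffQuot, smul_eq_mul, inv_mul_eq_div]
  simp only [hdiffQuot]
  exact tendsto_eLpNorm_diffQuot_mul_sub ha e one_le_two (by exact_mod_cast (by omega : 2 < d))
    (ENNReal.natCast_ne_top d) hpartial hu.continuous husupp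

/-- Approximation lemma: if `a = A_l ∈ W^{1,d}_loc(ℝ^d)` (`d ≥ 3`) and `u ∈ H¹(ℝ^d)` is
compactly supported, then `(∂_k^δ a) τ_k^δ u → (∂_k a) u` in `L²(ℝ^d)` as `δ → 0`. -/
theorem diff_quotient_approximation (d : ℕ) (hd : 3 ≤ d) (k : Fin d)
    (a : EuclideanSpace ℝ (Fin d) → ℝ)
    (ha : Differentiable ℝ a)
    (haW : ∀ K : Set (EuclideanSpace ℝ (Fin d)), IsCompact K →
      MemLp (fun x => ‖fderiv ℝ a x‖) (d : ℝ≥0∞) (volume.restrict K))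
    (u : EuclideanSpace ℝ (Fin d) → ℂ)
    (hu : Differentiable ℝ u) (husupp : HasCompactSupport u)
    (huL2 : MemLp u 2 (volume : Measure (EuclideanSpace ℝ (Fin d))))
    (hugrad : MemLp (fun x => ‖fderiv ℝ u x‖) 2
      (volume : Measure (EuclideanSpace ℝ (Fin d)))) :
    Tendsto (fun δ : ℝ =>
        eLpNorm (fun x : EuclideanSpace ℝ (Fin d) =>
            (((a (x + δ • EuclideanSpace.single k (1 : ℝ)) - a x) / δ : ℝ) : ℂ) *
              u (x + δ • EuclideanSpace.single k (1 : ℝ))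
            - ((fderiv ℝ a x (EuclideanSpace.single k (1 : ℝ)) : ℝ) : ℂ) * u x)
          2 volume)
      (𝓝[≠] (0 : ℝ)) (𝓝 0) :=
  diff_quotient_approximation_general d hd k a ha haW u hu husupp
end
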